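/- arXiv:2508.13961 — 8 statements merged into one kernel-verified Lean document; each statement's English description precedes it below -/
import Mathlib

section
/- Let g be a nonzero element of R whose Newton polygon has affine dimension 2 (i.e. supp(g) is not contained in any affine line of ℝ²). Then for every (i,j) ∈ ℤ² with (i,j) ≠ (0,0), there is no h ∈ R satisfying h * g = 1 + x^i y^j. (Physically: an excitation whose characteristic polynomial has two-dimensional Newton polygon is a fracton.) -/
/-- The Laurent polynomial ring `𝔽₂[x^{±1}, y^{±1}]`, realized as the monoid
algebra of `ℤ × ℤ` over `ZMod 2`. -/
noncomputable abbrev R2 : Type := AddMonoidAlgebra (ZMod 2) (ℤ × ℤ)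

/-- The monomial `x^i y^j` for `p = (i, j) ∈ ℤ²`. -/
noncomputable def mono (p : ℤ × ℤ) : R2 := AddMonoidAlgebra.single p 1

/-- The Newton polygon of `f`: the convex hull in `ℝ²` of the support of `f`. -/
noncomputable def newt (f : R2) : Set (ℝ × ℝ) :=
  convexHull ℝ ((fun p : ℤ × ℤ => ((p.1 : ℝ), (p.2 : ℝ))) '' (f.coeff.support : Set (ℤ × ℤ)))

/-- The affine dimension of the Newton polygon of `f`: the `ℝ`-dimension of the
direction submodule of the affine span of `newt f`. -/
noncomputable def newtDim (f : R2) : ℕ :=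
  Module.finrank ℝ (affineSpan ℝ (newt f)).direction

open Finset Finsupp Pointwise

/-- Top-slice lemma: the maximum of an additive weight `φ` over the support of a
product is the sum of the maxima over the supports of the factors. -/
lemma sliceLemma (φ : ℤ × ℤ → ℤ) (hφ : ∀ a b, φ (a + b) = φ a + φ b)
    (f g : R2) (hf : f ≠ 0) (hg : g ≠ 0) :
    ∃ r ∈ (f * g).coeff.support,
      φ r = f.coeff.support.sup' (Finsupp.support_nonempty_iff.2 (AddMonoidAlgebra.coeff_eq_zero.not.2 hf)) φ
          + g.coeff.support.sup' (Finsupp.support_nonempty_iff.2 (AddMonoidAlgebra.coeff_eq_zero.not.2 hg)) φ := by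
  classical
  set Mf := f.coeff.support.sup' (Finsupp.support_nonempty_iff.2 (AddMonoidAlgebra.coeff_eq_zero.not.2 hf)) φ with hMf
  set Mg := g.coeff.support.sup' (Finsupp.support_nonempty_iff.2 (AddMonoidAlgebra.coeff_eq_zero.not.2 hg)) φ with hMg
  set ft : R2 := AddMonoidAlgebra.ofCoeff <| f.coeff.filter (fun a => φ a = Mf) with hft
  set fc : R2 := AddMonoidAlgebra.ofCoeff <| f.coeff.filter (fun a => ¬ φ a = Mf) with hfc
  set gt : R2 := AddMonoidAlgebra.ofCoeff <| g.coeff.filter (fun a => φ a = Mg) with hgt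
  set gc : R2 := AddMonoidAlgebra.ofCoeff <| g.coeff.filter (fun a => ¬ φ a = Mg) with hgc
  have hfsplit : ft + fc = f := AddMonoidAlgebra.coeff_injective (Finsupp.filter_pos_add_filter_neg f.coeff _)
  have hgsplit : gt + gc = g := AddMonoidAlgebra.coeff_injective (Finsupp.filter_pos_add_filter_neg g.coeff _)
  -- supports of slices
  have hftsupp : ∀ a ∈ ft.coeff.support, a ∈ f.coeff.support ∧ φ a = Mf := by
    intro a ha
    rw [hft, AddMonoidAlgebra.coeff_ofCoeff, Finsupp.support_filter, Finset.mem_filter] at ha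
    exact ha
  have hgtsupp : ∀ a ∈ gt.coeff.support, a ∈ g.coeff.support ∧ φ a = Mg := by
    intro a ha
    rw [hgt, AddMonoidAlgebra.coeff_ofCoeff, Finsupp.support_filter, Finset.mem_filter] at ha
    exact ha
  have hfcsupp : ∀ a ∈ fc.coeff.support, φ a < Mf := by
    intro a ha
    rw [hfc, AddMonoidAlgebra.coeff_ofCoeff, Finsupp.support_filter, Finset.mem_filter] at ha
    exact lt_of_le_of_ne (Finset.le_sup' φ ha.1) ha.2
  have hgcsupp : ∀ a ∈ gc.coeff.support, φ a < Mg := by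
    intro a ha
    rw [hgc, AddMonoidAlgebra.coeff_ofCoeff, Finsupp.support_filter, Finset.mem_filter] at ha
    exact lt_of_le_of_ne (Finset.le_sup' φ ha.1) ha.2
  -- the top slices are nonzero
  have hftne : ft ≠ 0 := by
    obtain ⟨a, ha, hae⟩ := Finset.exists_mem_eq_sup' (Finsupp.support_nonempty_iff.2 (AddMonoidAlgebra.coeff_eq_zero.not.2 hf)) φ
    intro h0
    have : ft.coeff a = f.coeff a := Finsupp.filter_apply_pos _ f.coeff hae.symm
    rw [h0] at this
    exact (Finsupp.mem_support_iff.1 ha) (by simpa using this.symm)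
  have hgtne : gt ≠ 0 := by
    obtain ⟨a, ha, hae⟩ := Finset.exists_mem_eq_sup' (Finsupp.support_nonempty_iff.2 (AddMonoidAlgebra.coeff_eq_zero.not.2 hg)) φ
    intro h0
    have : gt.coeff a = g.coeff a := Finsupp.filter_apply_pos _ g.coeff hae.symm
    rw [h0] at this
    exact (Finsupp.mem_support_iff.1 ha) (by simpa using this.symm)
  have hmulne : ft * gt ≠ 0 := mul_ne_zero hftne hgtne
  obtain ⟨r, hr⟩ := Finsupp.support_nonempty_iff.2 (AddMonoidAlgebra.coeff_eq_zero.not.2 hmulne)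
  have hrmem : r ∈ ft.coeff.support + gt.coeff.support := AddMonoidAlgebra.support_coeff_mul_subset ft gt hr
  obtain ⟨a, ha, b, hb, hab⟩ := Finset.mem_add.1 hrmem
  have hφr : φ r = Mf + Mg := by
    rw [← hab, hφ, (hftsupp a ha).2, (hgtsupp b hb).2]
  refine ⟨r, ?_, hφr⟩
  -- show the coefficient of `f * g` at `r` equals that of `ft * gt`
  have hrest : ∀ x ∈ (ft * gc + fc * gt + fc * gc).coeff.support, φ x < Mf + Mg := by
    intro x hx
    have hx2 := Finsupp.support_add (g₁ := (ft * gc + fc * gt).coeff) (g₂ := (fc * gc).coeff) hx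
    rcases Finset.mem_union.1 hx2 with hx3 | hx3
    · rcases Finset.mem_union.1 (Finsupp.support_add (g₁ := (ft * gc).coeff) (g₂ := (fc * gt).coeff) hx3) with hx4 | hx4
      · obtain ⟨a', ha', b', hb', hab'⟩ := Finset.mem_add.1 (AddMonoidAlgebra.support_coeff_mul_subset _ _ hx4)
        rw [← hab', hφ, (hftsupp a' ha').2]
        exact add_lt_add_right (hgcsupp b' hb') _
      · obtain ⟨a', ha', b', hb', hab'⟩ := Finset.mem_add.1 (AddMonoidAlgebra.support_coeff_mul_subset _ _ hx4)
        rw [← hab', hφ, (hgtsupp b' hb').2]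
        exact add_lt_add_left (hfcsupp a' ha') _
    · obtain ⟨a', ha', b', hb', hab'⟩ := Finset.mem_add.1 (AddMonoidAlgebra.support_coeff_mul_subset _ _ hx3)
      rw [← hab', hφ]
      exact add_lt_add (hfcsupp a' ha') (hgcsupp b' hb')
  have hrnot : r ∉ (ft * gc + fc * gt + fc * gc).coeff.support := by
    intro hmem
    exact lt_irrefl _ (hφr ▸ hrest r hmem)
  have hsplit : f * g = ft * gt + (ft * gc + fc * gt + fc * gc) := by
    rw [← hfsplit, ← hgsplit]
    ring
  rw [Finsupp.mem_support_iff, hsplit, AddMonoidAlgebra.coeff_add, Finsupp.add_apply,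
    Finsupp.notMem_support_iff.1 hrnot, add_zero]
  exact Finsupp.mem_support_iff.1 hr

/-- If an additive weight `φ` is constant on the support of a product of two
nonzero elements, then it is constant on the support of each factor. -/
lemma const_on_support (φ : ℤ × ℤ → ℤ) (hφ : ∀ a b, φ (a + b) = φ a + φ b)
    (f g : R2) (hf : f ≠ 0) (hg : g ≠ 0) (c : ℤ)
    (hc : ∀ r ∈ (f * g).coeff.support, φ r = c) :
    ∀ p ∈ g.coeff.support, ∀ q ∈ g.coeff.support, φ p = φ q := by
  classical
  have hφ' : ∀ a b, (fun x => -φ x) (a + b) = (fun x => -φ x) a + (fun x => -φ x) b := by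
    intro a b; simp [hφ]; ring
  obtain ⟨r1, hr1, he1⟩ := sliceLemma φ hφ f g hf hg
  obtain ⟨r2, hr2, he2⟩ := sliceLemma (fun x => -φ x) hφ' f g hf hg
  set Mf := f.coeff.support.sup' (Finsupp.support_nonempty_iff.2 (AddMonoidAlgebra.coeff_eq_zero.not.2 hf)) φ
  set Mg := g.coeff.support.sup' (Finsupp.support_nonempty_iff.2 (AddMonoidAlgebra.coeff_eq_zero.not.2 hg)) φ
  set Nf := f.coeff.support.sup' (Finsupp.support_nonempty_iff.2 (AddMonoidAlgebra.coeff_eq_zero.not.2 hf)) (fun x => -φ x)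
  set Ng := g.coeff.support.sup' (Finsupp.support_nonempty_iff.2 (AddMonoidAlgebra.coeff_eq_zero.not.2 hg)) (fun x => -φ x)
  have h1 : Mf + Mg = c := by rw [← he1]; exact hc r1 hr1
  have h2 : Nf + Ng = -c := by rw [← he2]; rw [hc r2 hr2]
  obtain ⟨a0, ha0⟩ := Finsupp.support_nonempty_iff.2 (AddMonoidAlgebra.coeff_eq_zero.not.2 hf)
  have hMf : φ a0 ≤ Mf := Finset.le_sup' φ ha0
  have hNf : -φ a0 ≤ Nf := Finset.le_sup' (fun x => -φ x) ha0
  intro p hp q hq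
  have h3 : φ p ≤ Mg := Finset.le_sup' φ hp
  have h4 : -φ p ≤ Ng := Finset.le_sup' (fun x => -φ x) hp
  have h5 : φ q ≤ Mg := Finset.le_sup' φ hq
  have h6 : -φ q ≤ Ng := Finset.le_sup' (fun x => -φ x) hq
  omega

/-- If the Newton polygon of a nonzero `g ∈ 𝔽₂[x^{±1}, y^{±1}]` has
affine dimension `2`, then for no `(i,j) ≠ (0,0)` does there exist `h` with
`h * g = 1 + x^i y^j`: the corresponding excitation is a fracton. -/
theorem fracton_of_newtDim_two (g : R2) (hg : g ≠ 0) (hdim : newtDim g = 2) :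
    ∀ i j : ℤ, (i, j) ≠ ((0 : ℤ), (0 : ℤ)) →
      ¬ ∃ h : R2, h * g = 1 + mono (i, j) := by
  classical
  rintro i j hij ⟨h, hh⟩
  set φ : ℤ × ℤ → ℤ := fun p => j * p.1 - i * p.2 with hφdef
  have hφ : ∀ a b, φ (a + b) = φ a + φ b := by
    intro a b
    simp only [hφdef, Prod.fst_add, Prod.snd_add]
    ring
  -- h ≠ 0
  have hh0 : h ≠ 0 := by
    rintro rfl
    rw [zero_mul] at hh
    have h1 : mono (i, j) = -(1 : R2) := eq_neg_of_add_eq_zero_right hh.symm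
    have h2 : -(1 : R2) = 1 := by
      rw [AddMonoidAlgebra.one_def, ← AddMonoidAlgebra.single_neg]
      congr 1
    rw [h2, mono, AddMonoidAlgebra.one_def] at h1
    have h3 : (i, j) = (0 : ℤ × ℤ) :=
      AddMonoidAlgebra.single_left_injective (one_ne_zero) h1
    exact hij h3
  -- φ vanishes on the support of h * g
  have hsupp : ∀ r ∈ (h * g).coeff.support, φ r = 0 := by
    intro r hr
    rw [hh] at hr
    have hr2 := Finsupp.support_add (g₁ := (1 : R2).coeff) (g₂ := (mono (i, j)).coeff) hr
    have h1s : ((1 : R2)).coeff.support ⊆ {((0 : ℤ), (0 : ℤ))} := by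
      rw [AddMonoidAlgebra.one_def]
      exact Finsupp.support_single_subset
    have h2s : (mono (i, j)).coeff.support ⊆ {(i, j)} := by
      rw [mono]
      exact Finsupp.support_single_subset
    rcases Finset.mem_union.1 hr2 with hr3 | hr3
    · have := h1s hr3
      rw [Finset.mem_singleton] at this
      subst this
      simp [hφdef]
    · have := h2s hr3
      rw [Finset.mem_singleton] at this
      subst this
      simp only [hφdef]
      ring
  have hconst := const_on_support φ hφ h g hh0 hg 0 hsupp
  -- geometry: the support of g lies on a line, so its Newton polygon has dim ≤ 1
  obtain ⟨p0, hp0⟩ := Finsupp.support_nonempty_iff.2 (AddMonoidAlgebra.coeff_eq_zero.not.2 hg)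
  set lam : (ℝ × ℝ) →ₗ[ℝ] ℝ :=
    (j : ℝ) • LinearMap.fst ℝ ℝ ℝ - (i : ℝ) • LinearMap.snd ℝ ℝ ℝ with hlamdef
  have hlamval : ∀ x : ℝ × ℝ, lam x = (j : ℝ) * x.1 - (i : ℝ) * x.2 := by
    intro x
    simp [hlamdef, smul_eq_mul]
  have hlam : ∀ p ∈ g.coeff.support,
      lam ((p.1 : ℝ), (p.2 : ℝ)) = lam ((p0.1 : ℝ), (p0.2 : ℝ)) := by
    intro p hp
    have := hconst p hp p0 hp0
    rw [hlamval, hlamval]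
    simp only [hφdef] at this
    push_cast
    have : ((j * p.1 - i * p.2 : ℤ) : ℝ) = ((j * p0.1 - i * p0.2 : ℤ) : ℝ) := by
      exact_mod_cast congrArg (fun n : ℤ => (n : ℝ)) this
    push_cast at this
    linarith
  set A : AffineSubspace ℝ (ℝ × ℝ) :=
    AffineSubspace.mk' ((p0.1 : ℝ), (p0.2 : ℝ)) (LinearMap.ker lam) with hA
  have hnewt : newt g ⊆ (A : Set (ℝ × ℝ)) := by
    apply convexHull_min _ (A.convex)
    rintro x ⟨p, hp, rfl⟩
    rw [hA]
    rw [AffineSubspace.mem_coe, AffineSubspace.mem_mk']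
    rw [LinearMap.mem_ker]
    have hv : ((p.1 : ℝ), (p.2 : ℝ)) -ᵥ ((p0.1 : ℝ), (p0.2 : ℝ))
        = (((p.1 : ℝ) - (p0.1 : ℝ), (p.2 : ℝ) - (p0.2 : ℝ)) : ℝ × ℝ) := rfl
    have h1 := hlam p (Finset.mem_coe.1 hp)
    rw [hlamval, hlamval] at h1
    rw [hv, hlamval]
    simp only
    ring_nf
    ring_nf at h1
    linarith
  have hdirle : (affineSpan ℝ (newt g)).direction ≤ LinearMap.ker lam := by
    have hle : affineSpan ℝ (newt g) ≤ A := affineSpan_le.2 hnewt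
    have := AffineSubspace.direction_le hle
    rwa [hA, AffineSubspace.direction_mk'] at this
  have hkerne : LinearMap.ker lam ≠ ⊤ := by
    intro htop
    have hmem : ((j : ℝ), -(i : ℝ)) ∈ LinearMap.ker lam := htop ▸ Submodule.mem_top
    rw [LinearMap.mem_ker, hlamval] at hmem
    simp only at hmem
    have hsum : (j : ℝ) ^ 2 + (i : ℝ) ^ 2 = 0 := by nlinarith [hmem]
    have hj2 : (j : ℝ) ^ 2 = 0 :=
      le_antisymm (by nlinarith [sq_nonneg (i : ℝ)]) (sq_nonneg _)
    have hi2 : (i : ℝ) ^ 2 = 0 :=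
      le_antisymm (by nlinarith [sq_nonneg (j : ℝ)]) (sq_nonneg _)
    have hjr : (j : ℝ) = 0 := by
      have := sq_eq_zero_iff.1 hj2
      exact this
    have hir : (i : ℝ) = 0 := by
      have := sq_eq_zero_iff.1 hi2
      exact this
    apply hij
    have hi0 : i = 0 := by exact_mod_cast hir
    have hj0 : j = 0 := by exact_mod_cast hjr
    simp [hi0, hj0]
  have hfr : Module.finrank ℝ (LinearMap.ker lam) < Module.finrank ℝ (ℝ × ℝ) :=
    Submodule.finrank_lt hkerne
  have hfr2 : Module.finrank ℝ (ℝ × ℝ) = 2 := by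
    simp [Module.finrank_prod]
  have hmono := Submodule.finrank_mono hdirle
  rw [newtDim] at hdim
  omega
end

section
/- Let u, v ∈ ℤ with (u,v) ≠ (0,0) and gcd(u,v) = 1, and set q = x^u y^v ∈ R. Let t be a polynomial over ZMod 2 with constant coefficient 1 and degree at least 1, let t(q) ∈ R denote the evaluation of t at q, and let T be the order of t. Then for every (i,j) ∈ ℤ² with (i,j) ≠ (0,0): there exists h ∈ R with h * t(q) = 1 + x^i y^j if and only if there exists a nonzero integer k with (i,j) = (kTu, kTv). (Physically: the excitation is a lineon moving along direction (u,v) with period T.) -/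
/-- The order of a polynomial `t` over `𝔽₂` (meaningful when `t.coeff 0 = 1`):
the least `T ≥ 1` such that `t` divides `1 + X^T`. -/
noncomputable def polyOrder (t : Polynomial (ZMod 2)) : ℕ :=
  sInf {n : ℕ | 1 ≤ n ∧ t ∣ 1 + Polynomial.X ^ n}

open Polynomial LaurentPolynomial

namespace LineonAux

variable {t : Polynomial (ZMod 2)}

lemma t_ne_zero (ht0 : t.coeff 0 = 1) : t ≠ 0 := by
  intro h; rw [h] at ht0; simp at ht0

lemma K_nontrivial (htdeg : 1 ≤ t.natDegree) : Nontrivial (AdjoinRoot t) := by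
  apply AdjoinRoot.nontrivial
  intro h
  have := Polynomial.natDegree_eq_zero_iff_degree_le_zero.mpr h.le
  omega

noncomputable def rootUnit (ht0 : t.coeff 0 = 1) : (AdjoinRoot t)ˣ where
  val := AdjoinRoot.root t
  inv := -(AdjoinRoot.mk t t.divX)
  val_inv := by
    have h0 : AdjoinRoot.root t * AdjoinRoot.mk t t.divX + 1 = 0 := by
      have h := congrArg (AdjoinRoot.mk t) (Polynomial.X_mul_divX_add t)
      rw [AdjoinRoot.mk_self, map_add, map_mul, AdjoinRoot.mk_X, ht0, Polynomial.C_1,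
        map_one] at h
      exact h
    linear_combination -h0
  inv_val := by
    have h0 : AdjoinRoot.root t * AdjoinRoot.mk t t.divX + 1 = 0 := by
      have h := congrArg (AdjoinRoot.mk t) (Polynomial.X_mul_divX_add t)
      rw [AdjoinRoot.mk_self, map_add, map_mul, AdjoinRoot.mk_X, ht0, Polynomial.C_1,
        map_one] at h
      exact h
    linear_combination -h0

lemma finiteK (ht0 : t.coeff 0 = 1) : Finite (AdjoinRoot t) := by
  have pb := AdjoinRoot.powerBasis (t_ne_zero ht0)
  haveI : Module.Finite (ZMod 2) (AdjoinRoot t) := Module.Finite.of_basis pb.basis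
  exact Module.finite_of_finite (ZMod 2)

lemma dvd_iff_pow_rootUnit (ht0 : t.coeff 0 = 1) (htdeg : 1 ≤ t.natDegree) (n : ℕ) :
    t ∣ 1 + X ^ n ↔ rootUnit ht0 ^ n = 1 := by
  haveI := K_nontrivial (t := t) htdeg
  haveI : CharP (AdjoinRoot t) 2 :=
    charP_of_injective_algebraMap (algebraMap (ZMod 2) (AdjoinRoot t)).injective 2
  rw [← AdjoinRoot.mk_eq_zero, map_add, map_one, map_pow, AdjoinRoot.mk_X]
  rw [Units.ext_iff, Units.val_pow_eq_pow_val, Units.val_one]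
  show _ ↔ (AdjoinRoot.root t) ^ n = 1
  constructor
  · intro h
    have := neg_eq_of_add_eq_zero_right h
    rw [CharTwo.neg_eq] at this
    exact this.symm
  · intro h
    rw [h]; exact CharTwo.add_self_eq_zero 1

lemma polyOrder_spec (ht0 : t.coeff 0 = 1) (htdeg : 1 ≤ t.natDegree) :
    polyOrder t = orderOf (rootUnit ht0) ∧ 1 ≤ orderOf (rootUnit ht0) := by
  haveI : Finite (AdjoinRoot t) := finiteK ht0
  have h1 : 0 < orderOf (rootUnit ht0) := orderOf_pos _
  have hmem : orderOf (rootUnit ht0) ∈ {n : ℕ | 1 ≤ n ∧ t ∣ 1 + Polynomial.X ^ n} :=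
    ⟨h1, (dvd_iff_pow_rootUnit ht0 htdeg _).mpr (pow_orderOf_eq_one _)⟩
  refine ⟨le_antisymm (Nat.sInf_le hmem) ?_, h1⟩
  have hS := Nat.sInf_mem (⟨_, hmem⟩ : Set.Nonempty _)
  exact Nat.le_of_dvd (lt_of_lt_of_le one_pos hS.1)
    (orderOf_dvd_of_pow_eq_one ((dvd_iff_pow_rootUnit ht0 htdeg _).mp hS.2))

lemma t_dvd_order (ht0 : t.coeff 0 = 1) (htdeg : 1 ≤ t.natDegree) :
    t ∣ 1 + X ^ (polyOrder t) := by
  obtain ⟨he, h1⟩ := polyOrder_spec ht0 htdeg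
  rw [he]
  exact (dvd_iff_pow_rootUnit ht0 htdeg _).mpr (pow_orderOf_eq_one _)

lemma mono_mul (p q : ℤ × ℤ) : mono p * mono q = mono (p + q) := by
  simp [mono, AddMonoidAlgebra.single_mul_single]

lemma mono_pow (p : ℤ × ℤ) (n : ℕ) : mono p ^ n = mono (n • p) := by
  simp [mono, AddMonoidAlgebra.single_pow]

lemma mono_zero : mono 0 = 1 := rfl

variable (K : Type) [CommRing K] [Algebra (ZMod 2) K]

noncomputable def expMap (r : Kˣ) (a b u v : ℤ) :
    Multiplicative (ℤ × ℤ) →* LaurentPolynomial K where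
  toFun g := LaurentPolynomial.C
      ((r ^ (a * (Multiplicative.toAdd g).1 + b * (Multiplicative.toAdd g).2) : Kˣ) : K) *
      LaurentPolynomial.T (-v * (Multiplicative.toAdd g).1 + u * (Multiplicative.toAdd g).2)
  map_one' := by simp
  map_mul' g h := by
    simp only [toAdd_mul, Prod.fst_add, Prod.snd_add]
    have e1 : a * ((Multiplicative.toAdd g).1 + (Multiplicative.toAdd h).1) +
        b * ((Multiplicative.toAdd g).2 + (Multiplicative.toAdd h).2) =
        (a * (Multiplicative.toAdd g).1 + b * (Multiplicative.toAdd g).2) +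
        (a * (Multiplicative.toAdd h).1 + b * (Multiplicative.toAdd h).2) := by ring
    have e2 : -v * ((Multiplicative.toAdd g).1 + (Multiplicative.toAdd h).1) +
        u * ((Multiplicative.toAdd g).2 + (Multiplicative.toAdd h).2) =
        (-v * (Multiplicative.toAdd g).1 + u * (Multiplicative.toAdd g).2) +
        (-v * (Multiplicative.toAdd h).1 + u * (Multiplicative.toAdd h).2) := by ring
    rw [e1, e2, zpow_add, Units.val_mul, map_mul, LaurentPolynomial.T_add]
    ring

noncomputable def phi (r : Kˣ) (a b u v : ℤ) : R2 →ₐ[ZMod 2] LaurentPolynomial K :=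
  AddMonoidAlgebra.lift (ZMod 2) (LaurentPolynomial K) (ℤ × ℤ) (expMap K r a b u v)

lemma phi_mono (r : Kˣ) (a b u v : ℤ) (p : ℤ × ℤ) :
    phi K r a b u v (mono p) =
      LaurentPolynomial.C ((r ^ (a * p.1 + b * p.2) : Kˣ) : K) *
        LaurentPolynomial.T (-v * p.1 + u * p.2) := by
  rw [mono, phi, AddMonoidAlgebra.lift_single, one_smul]
  rfl

noncomputable def CAlg : K →ₐ[ZMod 2] LaurentPolynomial K :=
  { LaurentPolynomial.C with
    commutes' := fun _ => rfl }

lemma aeval_CAlg (r : K) (s : Polynomial (ZMod 2)) :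
    Polynomial.aeval (LaurentPolynomial.C r) s =
      LaurentPolynomial.C (Polynomial.aeval r s) :=
  (Polynomial.aeval_algHom_apply (CAlg K) r s)

end LineonAux

open LineonAux

/-- Let `q = x^u y^v` with `(u,v) ≠ (0,0)` primitive, and let `t`
be a polynomial over `𝔽₂` with constant coefficient `1` and degree at least `1`,
of order `T`. Then for `(i,j) ≠ (0,0)`, a string operator moving the excitation
with characteristic polynomial `t(q)` by `(i,j)` exists iff `(i,j) = (kTu, kTv)`
for some nonzero integer `k`: the excitation is a lineon of direction `(u,v)`
and period `T`. -/
theorem lineon_of_characteristic_poly_in_one_monomial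
    (u v : ℤ) (huv : (u, v) ≠ ((0 : ℤ), (0 : ℤ))) (hcop : Int.gcd u v = 1)
    (t : Polynomial (ZMod 2)) (ht0 : t.coeff 0 = 1) (htdeg : 1 ≤ t.natDegree) :
    ∀ i j : ℤ, (i, j) ≠ ((0 : ℤ), (0 : ℤ)) →
      ((∃ h : R2, h * Polynomial.aeval (mono (u, v)) t = 1 + mono (i, j)) ↔
        ∃ k : ℤ, k ≠ 0 ∧ i = k * (polyOrder t : ℤ) * u ∧ j = k * (polyOrder t : ℤ) * v) := by
  intro i j hij
  haveI := K_nontrivial htdeg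
  haveI : Finite (AdjoinRoot t) := finiteK ht0
  set r : (AdjoinRoot t)ˣ := rootUnit ht0 with hr
  obtain ⟨hTord, hT1⟩ := polyOrder_spec ht0 htdeg
  -- Bezout coefficients
  set a : ℤ := Int.gcdA u v with ha
  set b : ℤ := Int.gcdB u v with hb
  have hB : a * u + b * v = 1 := by
    have h := Int.gcd_eq_gcd_ab u v
    rw [hcop] at h
    push_cast at h
    linarith
  constructor
  · rintro ⟨h, hh⟩
    have H := congrArg (phi (AdjoinRoot t) r a b u v) hh
    rw [map_mul, ← Polynomial.aeval_algHom_apply, phi_mono, map_add, map_one, phi_mono] at H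
    have e2 : -v * u + u * v = 0 := by ring
    rw [hB, e2, zpow_one, LaurentPolynomial.T_zero, mul_one] at H
    rw [aeval_CAlg] at H
    rw [show ((r : AdjoinRoot t)) = AdjoinRoot.root t from rfl, AdjoinRoot.aeval_eq,
      AdjoinRoot.mk_self, map_zero, mul_zero] at H
    rw [← LaurentPolynomial.single_eq_C_mul_T, AddMonoidAlgebra.one_def] at H
    by_cases hj0 : -v * i + u * j = 0
    · rw [hj0] at H
      have H0 : (1 : AdjoinRoot t) + ((r ^ (a * i + b * j) : (AdjoinRoot t)ˣ) : AdjoinRoot t)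
          = 0 := by
        have H1 := H.symm
        rw [← AddMonoidAlgebra.single_add, AddMonoidAlgebra.single_eq_zero] at H1
        exact H1
      haveI : CharP (AdjoinRoot t) 2 :=
        charP_of_injective_algebraMap (algebraMap (ZMod 2) (AdjoinRoot t)).injective 2
      have hc : ((r ^ (a * i + b * j) : (AdjoinRoot t)ˣ) : AdjoinRoot t) = 1 := by
        have h2 := neg_eq_of_add_eq_zero_right H0
        rw [CharTwo.neg_eq] at h2
        exact h2.symm
      have hu1 : r ^ (a * i + b * j) = 1 := Units.ext (by simpa using hc)
      have hdvd : ((orderOf r : ℤ)) ∣ a * i + b * j := orderOf_dvd_iff_zpow_eq_one.mpr hu1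
      rw [← hTord] at hdvd
      obtain ⟨k, hk⟩ := hdvd
      have hiu : i = u * (a * i + b * j) - b * (-v * i + u * j) := by
        linear_combination (-i) * hB
      have hjv : j = v * (a * i + b * j) + a * (-v * i + u * j) := by
        linear_combination (-j) * hB
      rw [hj0, hk] at hiu hjv
      have hk0 : k ≠ 0 := by
        rintro rfl
        apply hij
        rw [Prod.mk.injEq]
        constructor
        · rw [hiu]; ring
        · rw [hjv]; ring
      exact ⟨k, hk0, by rw [hiu]; ring, by rw [hjv]; ring⟩
    · exfalso
      have H' : (0 : ℤ →₀ AdjoinRoot t) = Finsupp.single 0 1 +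
          Finsupp.single (-v * i + u * j)
            ((r ^ (a * i + b * j) : (AdjoinRoot t)ˣ) : AdjoinRoot t) := congrArg AddMonoidAlgebra.coeff H
      have H0 := DFunLike.congr_fun H' 0
      simp only [Finsupp.coe_zero, Pi.zero_apply, Finsupp.add_apply,
        Finsupp.single_eq_same, Finsupp.single_apply, if_neg hj0, add_zero] at H0
      exact zero_ne_one H0
  · rintro ⟨k, hk0, hi, hj⟩
    have hdT : t ∣ 1 + X ^ (polyOrder t) := t_dvd_order ht0 htdeg
    have key : ∀ m : ℕ, t ∣ 1 + X ^ (polyOrder t * m) := by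
      intro m
      have h3 := sub_dvd_pow_sub_pow (X ^ polyOrder t : Polynomial (ZMod 2)) 1 m
      rw [one_pow, ← pow_mul, CharTwo.sub_eq_add, CharTwo.sub_eq_add,
        add_comm (X ^ polyOrder t : Polynomial (ZMod 2)) 1,
        add_comm (X ^ (polyOrder t * m) : Polynomial (ZMod 2)) 1] at h3
      exact hdT.trans h3
    have keyR : ∀ m : ℕ,
        Polynomial.aeval (mono (u, v)) t ∣ 1 + mono ((polyOrder t * m) • ((u, v) : ℤ × ℤ)) := by
      intro m
      have hd2 := map_dvd (Polynomial.aeval (mono (u, v))) (key m)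
      rwa [map_add, map_one, map_pow, Polynomial.aeval_X, mono_pow] at hd2
    rcases lt_or_gt_of_ne hk0 with hk | hk
    · -- k < 0
      have hm : (((-k).toNat : ℤ)) = -k := Int.toNat_of_nonneg (by omega)
      have hsm : ((polyOrder t * (-k).toNat) • ((u, v) : ℤ × ℤ)) = (-i, -j) := by
        have hc : ((polyOrder t * (-k).toNat : ℕ) : ℤ) = (polyOrder t : ℤ) * (-k) := by
          push_cast [hm]; ring
        simp only [Prod.smul_mk, nsmul_eq_mul, hc, hi, hj, Prod.mk.injEq]
        constructor <;> ring
      have hd2 := keyR (-k).toNat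
      rw [hsm] at hd2
      have hfac : (1 + mono (i, j)) = mono (i, j) * (1 + mono (-i, -j)) := by
        rw [mul_add, mul_one, mono_mul,
          show ((i, j) : ℤ × ℤ) + (-i, -j) = 0 by rw [Prod.mk_add_mk]; simp,
          mono_zero, add_comm]
      obtain ⟨c, hc2⟩ := hd2
      exact ⟨mono (i, j) * c, by rw [hfac, hc2]; ring⟩
    · -- k > 0
      have hm : ((k.toNat : ℤ)) = k := Int.toNat_of_nonneg (by omega)
      have hsm : ((polyOrder t * k.toNat) • ((u, v) : ℤ × ℤ)) = (i, j) := by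
        have hc : ((polyOrder t * k.toNat : ℕ) : ℤ) = (polyOrder t : ℤ) * k := by
          push_cast [hm]; ring
        simp only [Prod.smul_mk, nsmul_eq_mul, hc, hi, hj, Prod.mk.injEq]
        constructor <;> ring
      have hd2 := keyR k.toNat
      rw [hsm] at hd2
      obtain ⟨c, hc2⟩ := hd2
      exact ⟨c, by rw [hc2]; ring⟩
end

section
/- Let t and p be polynomials over ZMod 2 with constant coefficient 1 such that t * p = 1 + X^T, where T is the order of t and deg p < T. Then for every integer c with 1 ≤ c ≤ T - 1 and every integer n ≥ 1 with n ≠ T, the product t * (∑_{i=0}^{c} (coeff of X^i in p) · X^i) is not equal to 1 + X^n. -/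
open Polynomial

/-- Lemma 5 of the paper. Let `t, p` over `𝔽₂` have constant
coefficient `1`, with `t * p = 1 + X^T` where `T` is the order of `t` and
`deg p < T`. Then for every `1 ≤ c ≤ T - 1` and every `n ≥ 1` with `n ≠ T`,
the product of `t` with the truncation of `p` to degrees `≤ c`
is not of the form `1 + X^n`. -/
theorem mul_truncation_ne_one_add_X_pow
    (t p : Polynomial (ZMod 2)) (ht0 : t.coeff 0 = 1) (hp0 : p.coeff 0 = 1)
    (hdeg : p.natDegree < polyOrder t)
    (h : t * p = 1 + X ^ polyOrder t) :
    ∀ c : ℕ, 1 ≤ c → c ≤ polyOrder t - 1 →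
      ∀ n : ℕ, 1 ≤ n → n ≠ polyOrder t →
        t * (∑ i ∈ Finset.range (c + 1), C (p.coeff i) * X ^ i) ≠ 1 + X ^ n := by
  intro c hc1 hc2 n hn1 hnT heq
  set T := polyOrder t with hTdef
  set q : Polynomial (ZMod 2) := ∑ i ∈ Finset.range (c + 1), C (p.coeff i) * X ^ i with hq
  have htne : t ≠ 0 := by intro h0; rw [h0] at ht0; simp at ht0
  have hpne : p ≠ 0 := by intro h0; rw [h0] at hp0; simp at hp0
  have hT1 : 1 ≤ T := lt_of_le_of_lt (Nat.zero_le _) hdeg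
  have hmin : ∀ m, 1 ≤ m → t ∣ 1 + X ^ m → T ≤ m := fun m hm hd => Nat.sInf_le ⟨hm, hd⟩
  have hdvdT : t ∣ 1 + X ^ T := ⟨p, h.symm⟩
  have hdvdn : t ∣ 1 + X ^ n := ⟨q, heq.symm⟩
  have hTn : T < n := lt_of_le_of_ne (hmin n hn1 hdvdn) (Ne.symm hnT)
  -- T divides n
  have hmod : t ∣ 1 + X ^ (n % T) := by
    have h1 : t ∣ (X : Polynomial (ZMod 2)) ^ T - 1 := by
      rw [CharTwo.sub_eq_add, add_comm]; exact hdvdT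
    have h2 : t ∣ ((X : Polynomial (ZMod 2)) ^ T) ^ (n / T) - 1 ^ (n / T) :=
      h1.trans (sub_dvd_pow_sub_pow _ _ _)
    have h3 : t ∣ X ^ (n % T) * (((X : Polynomial (ZMod 2)) ^ T) ^ (n / T) - 1 ^ (n / T)) :=
      h2.mul_left _
    have e : 1 + X ^ (n % T) =
        (1 + X ^ n) + X ^ (n % T) * (((X : Polynomial (ZMod 2)) ^ T) ^ (n / T) - 1 ^ (n / T)) := by
      rw [one_pow, CharTwo.sub_eq_add, ← pow_mul, mul_add, ← pow_add,
        Nat.mod_add_div, mul_one]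
      ring_nf
      rw [show (2 : Polynomial (ZMod 2)) = 0 from CharTwo.two_eq_zero]
      ring
    rw [e]; exact dvd_add hdvdn h3
  have hr0 : n % T = 0 := by
    by_contra hr
    have := hmin (n % T) (by omega) hmod
    have := Nat.mod_lt n (show 0 < T by omega)
    omega
  have hdvd : T ∣ n := Nat.dvd_of_mod_eq_zero hr0
  have h2T : 2 * T ≤ n := by
    have : T ≤ n - T := Nat.le_of_dvd (by omega) (Nat.dvd_sub hdvd dvd_rfl)
    omega
  -- q is nonzero
  have hq0 : q.coeff 0 = 1 := by
    rw [hq, Polynomial.finset_sum_coeff]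
    rw [Finset.sum_eq_single 0]
    · simp [hp0]
    · intro i _ hi; simp [coeff_X_pow, Ne.symm hi]
    · intro h0; simp at h0
  have hqne : q ≠ 0 := by intro h0; rw [h0] at hq0; simp at hq0
  -- degrees
  have hdegq : q.natDegree ≤ c := by
    apply Polynomial.natDegree_sum_le_of_forall_le
    intro i hi
    calc (C (p.coeff i) * X ^ i).natDegree ≤ (X ^ i : Polynomial (ZMod 2)).natDegree :=
          natDegree_C_mul_le _ _
      _ = i := natDegree_X_pow i
      _ ≤ c := by simpa using Nat.lt_succ_iff.mp (Finset.mem_range.mp hi)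
  have hdn : (1 + X ^ n : Polynomial (ZMod 2)).natDegree = n := by
    rw [add_comm, ← Polynomial.C_1, natDegree_X_pow_add_C]
  have hdT : (1 + X ^ T : Polynomial (ZMod 2)).natDegree = T := by
    rw [add_comm, ← Polynomial.C_1, natDegree_X_pow_add_C]
  have e1 : t.natDegree + q.natDegree = n := by
    rw [← natDegree_mul htne hqne, heq, hdn]
  have e2 : t.natDegree + p.natDegree = T := by
    rw [← natDegree_mul htne hpne, h, hdT]
  omega
end

section
/- (Ostrowski) Let f and g be nonzero elements of R. Then the Newton polygon of the product f * g equals the Minkowski sum of the Newton polygons of f and of g: Newt(f * g) = Newt(f) + Newt(g), where A + B = {a + b : a ∈ A, b ∈ B} ⊆ ℝ². -/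
open Pointwise

/-- The embedding `ℤ × ℤ →+ ℝ × ℝ`. -/
noncomputable def newtPhi : (ℤ × ℤ) →+ (ℝ × ℝ) :=
  AddMonoidHom.prodMap (Int.castAddHom ℝ) (Int.castAddHom ℝ)

lemma newtPhi_def : ⇑newtPhi = fun p : ℤ × ℤ => ((p.1 : ℝ), (p.2 : ℝ)) := rfl

lemma newtPhi_inj : Function.Injective newtPhi := by
  intro a b h
  rw [newtPhi_def] at h
  have h1 := congrArg Prod.fst h
  have h2 := congrArg Prod.snd h
  simp only at h1 h2
  exact Prod.ext (by exact_mod_cast h1) (by exact_mod_cast h2)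

/-- Uniqueness of decomposition of an extreme point of a Minkowski sum. -/
lemma extreme_add_unique {A B : Set (ℝ × ℝ)} {v a a' b b' : ℝ × ℝ}
    (hv : v ∈ (A + B).extremePoints ℝ) (ha : a ∈ A) (hb : b ∈ B) (ha' : a' ∈ A)
    (hb' : b' ∈ B) (hab : a + b = v) (hab' : a' + b' = v) : a = a' ∧ b = b' := by
  rw [mem_extremePoints] at hv
  have h1 : a + b' ∈ A + B := Set.add_mem_add ha hb'
  have h2 : a' + b ∈ A + B := Set.add_mem_add ha' hb
  have hmid : v ∈ openSegment ℝ (a + b') (a' + b) := by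
    refine ⟨1/2, 1/2, by norm_num, by norm_num, by norm_num, ?_⟩
    have : (1/2 : ℝ) • (a + b') + (1/2 : ℝ) • (a' + b)
        = (1/2 : ℝ) • (a + b) + (1/2 : ℝ) • (a' + b') := by module
    rw [this, hab, hab', ← add_smul]
    norm_num
  obtain ⟨e1, e2⟩ := hv.2 _ h1 _ h2 hmid
  have hbb : b' = b := by
    have : a + b' = a + b := by rw [e1, ← hab]
    exact add_left_cancel this
  have haa : a = a' := by
    have : a' + b = a + b := by rw [e2, ← hab]
    exact (add_right_cancel this).symm
  exact ⟨haa, hbb.symm⟩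

/-- Ostrowski. For nonzero `f, g ∈ 𝔽₂[x^{±1}, y^{±1}]`, the
Newton polygon of the product is the Minkowski sum of the Newton polygons:
`Newt(f * g) = Newt(f) + Newt(g)`. -/
theorem newt_mul (f g : R2) (hf : f ≠ 0) (hg : g ≠ 0) :
    newt (f * g) = newt f + newt g := by
  classical
  have hnewt : ∀ h : R2, newt h = convexHull ℝ (newtPhi '' (h.coeff.support : Set (ℤ × ℤ))) := by
    intro h; rw [newt, newtPhi_def]
  set Sf : Set (ℝ × ℝ) := newtPhi '' (f.coeff.support : Set (ℤ × ℤ)) with hSf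
  set Sg : Set (ℝ × ℝ) := newtPhi '' (g.coeff.support : Set (ℤ × ℤ)) with hSg
  have hsum : newt f + newt g = convexHull ℝ (Sf + Sg) := by
    rw [hnewt f, hnewt g, convexHull_add]
  -- the easy inclusion
  have hsupp : (newtPhi '' (((f * g).coeff.support : Set (ℤ × ℤ)))) ⊆ Sf + Sg := by
    intro v hv
    obtain ⟨p, hp, rfl⟩ := hv
    have hp' : p ∈ ((f.coeff.support + g.coeff.support : Finset (ℤ × ℤ)) : Set (ℤ × ℤ)) := by
      exact_mod_cast AddMonoidAlgebra.support_coeff_mul_subset f g hp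
    rw [Finset.coe_add] at hp'
    obtain ⟨a, ha, b, hb, rfl⟩ := hp'
    rw [map_add]
    exact Set.add_mem_add (Set.mem_image_of_mem _ ha) (Set.mem_image_of_mem _ hb)
  have easy : newt (f * g) ⊆ newt f + newt g := by
    rw [hnewt (f * g), hsum]
    exact convexHull_mono hsupp
  -- the hard inclusion
  -- uniqueness of decompositions at extreme points
  have hAconv := convex_convexHull ℝ Sf
  have hBconv := convex_convexHull ℝ Sg
  have hfin : (Sf + Sg).Finite :=
    ((f.coeff.support : Set (ℤ × ℤ)).toFinite.image _).add ((g.coeff.support : Set (ℤ × ℤ)).toFinite.image _)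
  have hcomp : IsCompact (convexHull ℝ (Sf + Sg)) := hfin.isCompact_convexHull ℝ
  have hconv : Convex ℝ (convexHull ℝ (Sf + Sg)) := convex_convexHull ℝ _
  have hEP : (convexHull ℝ (Sf + Sg)).extremePoints ℝ
      ⊆ newtPhi '' (((f * g).coeff.support : Set (ℤ × ℤ))) := by
    intro v hv
    have hvmem : v ∈ Sf + Sg := extremePoints_convexHull_subset hv
    obtain ⟨av, hav, bv, hbv, habv⟩ := hvmem
    obtain ⟨p, hp, rfl⟩ := hav
    obtain ⟨q, hq, rfl⟩ := hbv
    -- v is extreme in convexHull Sf + convexHull Sg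
    have hv' : v ∈ (convexHull ℝ Sf + convexHull ℝ Sg).extremePoints ℝ := by
      rwa [← convexHull_add]
    -- uniqueness: any pair in the supports summing to p + q equals (p, q)
    have huniq : ∀ a ∈ f.coeff.support, ∀ b ∈ g.coeff.support, a + b = p + q → a = p ∧ b = q := by
      intro a ha b hb hab
      have hmem_a : newtPhi a ∈ convexHull ℝ Sf :=
        subset_convexHull ℝ _ (Set.mem_image_of_mem _ ha)
      have hmem_b : newtPhi b ∈ convexHull ℝ Sg :=
        subset_convexHull ℝ _ (Set.mem_image_of_mem _ hb)
      have hmem_p : newtPhi p ∈ convexHull ℝ Sf :=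
        subset_convexHull ℝ _ (Set.mem_image_of_mem _ hp)
      have hmem_q : newtPhi q ∈ convexHull ℝ Sg :=
        subset_convexHull ℝ _ (Set.mem_image_of_mem _ hq)
      have habv' : newtPhi p + newtPhi q = v := habv
      have hsum_ab : newtPhi a + newtPhi b = v := by
        rw [← map_add, hab, map_add]; exact habv'
      obtain ⟨h1, h2⟩ := extreme_add_unique hv' hmem_a hmem_b hmem_p hmem_q hsum_ab habv'
      exact ⟨newtPhi_inj h1, newtPhi_inj h2⟩
    -- the coefficient of f * g at p + q is nonzero
    have hpf : p ∈ f.coeff.support := hp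
    have hqg : q ∈ g.coeff.support := hq
    have hcoeff : (f * g).coeff (p + q) = f.coeff p * g.coeff q := by
      rw [AddMonoidAlgebra.coeff_mul]
      simp only [Finsupp.sum]
      rw [Finset.sum_eq_single_of_mem p hpf ?_]
      · rw [Finset.sum_eq_single_of_mem q hqg ?_]
        · simp
        · exact fun b hb hbq => if_neg fun h => hbq (huniq p hpf b hb h).2
      · intro a ha hanep
        exact Finset.sum_eq_zero fun b hb => if_neg fun h => hanep (huniq a ha b hb h).1
    have hne : (f * g).coeff (p + q) ≠ 0 := by
      rw [hcoeff]
      exact mul_ne_zero (Finsupp.mem_support_iff.mp hp) (Finsupp.mem_support_iff.mp hq)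
    refine ⟨p + q, Finsupp.mem_support_iff.mpr hne, ?_⟩
    rw [map_add]; exact habv
  have hard : newt f + newt g ⊆ newt (f * g) := by
    rw [hsum, ← closure_convexHull_extremePoints hcomp hconv]
    have hclosed : IsClosed (newt (f * g)) := by
      rw [hnewt (f * g)]
      exact (((f * g).coeff.support : Set (ℤ × ℤ)).toFinite.image _).isClosed_convexHull ℝ
    refine closure_minimal ?_ hclosed
    rw [hnewt (f * g)]
    exact convexHull_mono hEP
  exact Set.Subset.antisymm easy hard
end

section
/- Let f and g be nonzero elements of R. Then the affine dimension of the Newton polygon of f * g is at least the maximum of the affine dimensions of the Newton polygons of f and of g. -/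
namespace NewtAux

/-- The embedding `ℤ² → ℝ²`. -/
def eR (p : ℤ × ℤ) : ℝ × ℝ := ((p.1 : ℝ), (p.2 : ℝ))

lemma eR_inj : Function.Injective eR := by
  intro p q h
  have h1 : (p.1 : ℝ) = q.1 := congrArg Prod.fst h
  have h2 : (p.2 : ℝ) = q.2 := congrArg Prod.snd h
  exact Prod.ext (by exact_mod_cast h1) (by exact_mod_cast h2)

lemma mem_newt {f : R2} {a : ℤ × ℤ} (ha : a ∈ f.coeff.support) : eR a ∈ newt f :=
  subset_convexHull ℝ _ ⟨a, ha, rfl⟩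

/-- Key algebraic lemma: leading terms with respect to any injective additive
map into `Lex (ℤ × ℤ)` survive in a product. -/
lemma key (d : (ℤ × ℤ) →+ Lex (ℤ × ℤ)) (hd : Function.Injective d)
    (f g : R2) (hf : f ≠ 0) (hg : g ≠ 0) :
    ∃ a ∈ f.coeff.support, ∃ b ∈ g.coeff.support, a + b ∈ (f * g).coeff.support ∧
      (∀ x ∈ f.coeff.support, d x ≤ d a) ∧ (∀ y ∈ g.coeff.support, d y ≤ d b) ∧
      (∀ c ∈ (f * g).coeff.support, d c ≤ d (a + b)) := by
  classical
  obtain ⟨a, ha, hamax⟩ := f.coeff.support.exists_max_image d (Finsupp.support_nonempty_iff.2 (mt AddMonoidAlgebra.coeff_eq_zero.1 hf))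
  obtain ⟨b, hb, hbmax⟩ := g.coeff.support.exists_max_image d (Finsupp.support_nonempty_iff.2 (mt AddMonoidAlgebra.coeff_eq_zero.1 hg))
  have huniq : ∀ x ∈ f.coeff.support, ∀ y ∈ g.coeff.support, x + y = a + b → x = a ∧ y = b := by
    intro x hx y hy hxy
    have h1 : d x ≤ d a := hamax x hx
    have h2 : d y ≤ d b := hbmax y hy
    have hsum : d x + d y = d a + d b := by rw [← map_add, ← map_add, hxy]
    have hxa : d x = d a := by
      by_contra hne
      exact absurd hsum (ne_of_lt (add_lt_add_of_lt_of_le (h1.lt_of_ne hne) h2))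
    have hyb : d y = d b := by
      have h' := hsum; rw [hxa] at h'; exact add_left_cancel h'
    exact ⟨hd hxa, hd hyb⟩
  have hco : (f * g).coeff (a + b) = f.coeff a * g.coeff b := by
    rw [AddMonoidAlgebra.coeff_mul]
    show (∑ x ∈ f.coeff.support, ∑ y ∈ g.coeff.support,
        if x + y = a + b then f.coeff x * g.coeff y else 0) = f.coeff a * g.coeff b
    rw [Finset.sum_eq_single_of_mem a ha (fun x hx hxne => ?_)]
    · rw [Finset.sum_eq_single_of_mem b hb (fun y hy hyne => ?_)]
      · rw [if_pos rfl]
      · rw [if_neg]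
        intro hcontra
        exact hyne (huniq a ha y hy hcontra).2
    · apply Finset.sum_eq_zero
      intro y hy
      rw [if_neg]
      intro hcontra
      exact hxne (huniq x hx y hy hcontra).1
  have hmem : a + b ∈ (f * g).coeff.support := by
    rw [Finsupp.mem_support_iff, hco]
    exact mul_ne_zero (Finsupp.mem_support_iff.1 ha) (Finsupp.mem_support_iff.1 hb)
  refine ⟨a, ha, b, hb, hmem, hamax, hbmax, ?_⟩
  intro c hc
  obtain ⟨x, hx, y, hy, rfl⟩ := Finset.mem_add.1 (AddMonoidAlgebra.support_coeff_mul_subset f g hc)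
  rw [map_add, map_add]
  exact add_le_add (hamax x hx) (hbmax y hy)

/-- The lexicographic embedding as an additive monoid hom. -/
def d0 : (ℤ × ℤ) →+ Lex (ℤ × ℤ) := AddMonoidHom.mk' toLex (fun _ _ => rfl)

lemma d0_inj : Function.Injective d0 := toLex.injective

/-- Linear functional attached to a vector `v`, paired with a complementary
functional to make it injective, with values in the lexicographic order. -/
def lam (v p : ℤ × ℤ) : ℤ := v.2 * p.1 - v.1 * p.2

def dv (v : ℤ × ℤ) : (ℤ × ℤ) →+ Lex (ℤ × ℤ) :=
  AddMonoidHom.mk' (fun p => toLex (lam v p, v.1 * p.1 + v.2 * p.2))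
    (fun p q => by
      have hlex : ∀ x y : ℤ × ℤ, toLex x + toLex y = toLex (x + y) := fun _ _ => rfl
      rw [hlex]
      apply congrArg toLex
      apply Prod.ext <;> simp [lam, Prod.fst_add, Prod.snd_add] <;> ring)

lemma dv_apply (v p : ℤ × ℤ) : dv v p = toLex (lam v p, v.1 * p.1 + v.2 * p.2) := rfl

lemma dv_inj {v : ℤ × ℤ} (hv : v ≠ 0) : Function.Injective (dv v) := by
  intro p q h
  have h' : (lam v p, v.1 * p.1 + v.2 * p.2) = (lam v q, v.1 * q.1 + v.2 * q.2) :=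
    toLex.injective h
  have h1 : lam v p = lam v q := congrArg Prod.fst h'
  have h2 : v.1 * p.1 + v.2 * p.2 = v.1 * q.1 + v.2 * q.2 := congrArg Prod.snd h'
  have hvv : v.1 ^ 2 + v.2 ^ 2 ≠ 0 := by
    intro h0
    apply hv
    have e1 : v.1 = 0 := by nlinarith [sq_nonneg v.1, sq_nonneg v.2]
    have e2 : v.2 = 0 := by nlinarith [sq_nonneg v.1, sq_nonneg v.2]
    exact Prod.ext e1 e2
  unfold lam at h1
  have e1 : p.1 = q.1 := by
    have hz : (v.1 ^ 2 + v.2 ^ 2) * (p.1 - q.1) = 0 := by linear_combination v.2 * h1 + v.1 * h2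
    rcases mul_eq_zero.1 hz with h | h
    · exact absurd h hvv
    · linarith
  have e2 : p.2 = q.2 := by
    have hz : (v.1 ^ 2 + v.2 ^ 2) * (p.2 - q.2) = 0 := by linear_combination v.2 * h2 - v.1 * h1
    rcases mul_eq_zero.1 hz with h | h
    · exact absurd h hvv
    · linarith
  exact Prod.ext e1 e2

lemma lex_fst_le {x y : ℤ × ℤ} (h : toLex x ≤ toLex y) : x.1 ≤ y.1 := by
  rcases (Prod.Lex.le_iff (x := toLex x) (y := toLex y)).1 h with h | h
  · exact h.le
  · exact h.1.le

lemma dv_le {v x y : ℤ × ℤ} (h : dv v x ≤ dv v y) : lam v x ≤ lam v y :=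
  lex_fst_le h

lemma neg_d_le {d : (ℤ × ℤ) →+ Lex (ℤ × ℤ)} {x y : ℤ × ℤ}
    (h : (-d) x ≤ (-d) y) : d y ≤ d x := by
  have h' : -(d x) ≤ -(d y) := h
  exact le_of_neg_le_neg h'

/-- If the support contains two distinct points, the Newton polygon has
dimension at least 1. -/
lemma one_le_newtDim {f : R2} {a b : ℤ × ℤ} (ha : a ∈ f.coeff.support) (hb : b ∈ f.coeff.support)
    (hne : a ≠ b) : 1 ≤ newtDim f := by
  have hma : eR a ∈ affineSpan ℝ (newt f) := subset_affineSpan ℝ _ (mem_newt ha)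
  have hmb : eR b ∈ affineSpan ℝ (newt f) := subset_affineSpan ℝ _ (mem_newt hb)
  have hv : eR b - eR a ∈ (affineSpan ℝ (newt f)).direction :=
    AffineSubspace.vsub_mem_direction hmb hma
  have hvne : eR b - eR a ≠ 0 := sub_ne_zero.2 (fun h => hne (eR_inj h).symm)
  calc 1 = Module.finrank ℝ (ℝ ∙ (eR b - eR a)) := (finrank_span_singleton hvne).symm
    _ ≤ newtDim f :=
      Submodule.finrank_mono ((Submodule.span_singleton_le_iff_mem _ _).2 hv)

/-- If the Newton polygon has dimension at least 1, the support contains two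
distinct points. -/
lemma exists_pair {f : R2} (hf : f ≠ 0) (h : 1 ≤ newtDim f) :
    ∃ a ∈ f.coeff.support, ∃ b ∈ f.coeff.support, a ≠ b := by
  by_contra hcon
  push_neg at hcon
  obtain ⟨a, ha⟩ := Finsupp.support_nonempty_iff.2 (mt AddMonoidAlgebra.coeff_eq_zero.1 hf)
  have hsupp : (f.coeff.support : Set (ℤ × ℤ)) = {a} :=
    Set.Subset.antisymm (fun x hx => hcon x hx a ha) (by simp [ha])
  have hnewt : newt f = {eR a} := by
    unfold newt
    rw [hsupp, Set.image_singleton, convexHull_singleton]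
    rfl
  have h0 : newtDim f = 0 := by
    unfold newtDim
    rw [hnewt, direction_affineSpan, vectorSpan_singleton, finrank_bot]
  omega

/-- If the support lies on a line, the Newton polygon has dimension at most 1. -/
lemma newtDim_le_one {f : R2} {v : ℤ × ℤ} (hv : v ≠ 0) {k : ℤ}
    (h : ∀ p ∈ f.coeff.support, v.2 * p.1 - v.1 * p.2 = k) : newtDim f ≤ 1 := by
  set ℓ : (ℝ × ℝ) →ₗ[ℝ] ℝ :=
    { toFun := fun x => (v.2 : ℝ) * x.1 - (v.1 : ℝ) * x.2
      map_add' := by intro x y; dsimp; ring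
      map_smul' := by intro c x; dsimp; ring } with hℓ
  have hker : LinearMap.ker ℓ ≠ ⊤ := by
    intro htop
    have h0 : ℓ ((v.2 : ℝ), -(v.1 : ℝ)) = 0 := by
      have : ((v.2 : ℝ), -(v.1 : ℝ)) ∈ LinearMap.ker ℓ := by rw [htop]; trivial
      exact this
    have h0' : (v.2 : ℝ) * v.2 + (v.1 : ℝ) * v.1 = 0 := by
      simpa [hℓ] using h0
    apply hv
    have e1 : v.1 = 0 := by
      have : (v.1 : ℝ) = 0 := by nlinarith [mul_self_nonneg (v.1 : ℝ), mul_self_nonneg (v.2 : ℝ)]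
      exact_mod_cast this
    have e2 : v.2 = 0 := by
      have : (v.2 : ℝ) = 0 := by nlinarith [mul_self_nonneg (v.1 : ℝ), mul_self_nonneg (v.2 : ℝ)]
      exact_mod_cast this
    exact Prod.ext e1 e2
  have hker1 : Module.finrank ℝ (LinearMap.ker ℓ) ≤ 1 := by
    have hlt : Module.finrank ℝ (LinearMap.ker ℓ) < Module.finrank ℝ (ℝ × ℝ) :=
      Submodule.finrank_lt hker
    have h2 : Module.finrank ℝ (ℝ × ℝ) = 2 := by
      rw [Module.finrank_prod, Module.finrank_self]
    omega
  rcases Finset.eq_empty_or_nonempty f.coeff.support with hemp | ⟨a0, ha0⟩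
  · have hnewt : newt f = ∅ := by
      unfold newt
      rw [hemp]
      simp [convexHull_empty]
    unfold newtDim
    rw [hnewt, direction_affineSpan, vectorSpan_empty, finrank_bot]
    omega
  · set S : AffineSubspace ℝ (ℝ × ℝ) := AffineSubspace.mk' (eR a0) (LinearMap.ker ℓ) with hS
    have hval : ∀ p ∈ f.coeff.support, ℓ (eR p) = (k : ℝ) := by
      intro p hp
      have := h p hp
      have hcast : ((v.2 * p.1 - v.1 * p.2 : ℤ) : ℝ) = (k : ℝ) := by exact_mod_cast this
      push_cast at hcast
      simpa [hℓ, eR] using hcast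
    have hsub : newt f ⊆ (S : Set (ℝ × ℝ)) := by
      apply convexHull_min ?_ S.convex
      rintro x ⟨q, hq, rfl⟩
      show eR q ∈ S
      rw [hS, AffineSubspace.mem_mk']
      show eR q - eR a0 ∈ LinearMap.ker ℓ
      rw [LinearMap.mem_ker, map_sub, hval q hq, hval a0 ha0, sub_self]
    have hle : affineSpan ℝ (newt f) ≤ S := affineSpan_le.2 hsub
    have hdir : (affineSpan ℝ (newt f)).direction ≤ LinearMap.ker ℓ := by
      have hd := AffineSubspace.direction_le hle
      rwa [hS, AffineSubspace.direction_mk'] at hd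
    exact (Submodule.finrank_mono hdir).trans hker1

/-- Two distinct support points of `f` give two distinct support points of `f*g`. -/
lemma support_pair {f g : R2} (hf : f ≠ 0) (hg : g ≠ 0) {a b : ℤ × ℤ}
    (ha : a ∈ f.coeff.support) (hb : b ∈ f.coeff.support) (hne : a ≠ b) :
    ∃ s ∈ (f * g).coeff.support, ∃ t ∈ (f * g).coeff.support, s ≠ t := by
  obtain ⟨a₁, ha₁, b₁, hb₁, hm₁, hf₁, hg₁, -⟩ := key d0 d0_inj f g hf hg
  obtain ⟨a₂, ha₂, b₂, hb₂, hm₂, hf₂, hg₂, -⟩ :=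
    key (-d0) (fun x y hxy => d0_inj (neg_injective hxy)) f g hf hg
  refine ⟨a₁ + b₁, hm₁, a₂ + b₂, hm₂, ?_⟩
  have h21 : d0 a₂ ≤ d0 a₁ := neg_d_le (hf₂ a₁ ha₁)
  have hstrict : d0 a₂ < d0 a₁ := by
    rcases h21.lt_or_eq with h | h
    · exact h
    · exfalso
      have hall : ∀ x ∈ f.coeff.support, x = a₁ := by
        intro x hx
        have hx1 : d0 x ≤ d0 a₁ := hf₁ x hx
        have hx2 : d0 a₂ ≤ d0 x := neg_d_le (hf₂ x hx)
        exact d0_inj (le_antisymm hx1 (h ▸ hx2))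
      exact hne ((hall a ha).trans (hall b hb).symm)
  have hb21 : d0 b₂ ≤ d0 b₁ := neg_d_le (hg₂ b₁ hb₁)
  have hlt : d0 (a₂ + b₂) < d0 (a₁ + b₁) := by
    rw [map_add, map_add]
    exact add_lt_add_of_lt_of_le hstrict hb21
  intro heq
  rw [heq] at hlt
  exact lt_irrefl _ hlt

/-- Half of the main theorem. -/
lemma half (f g : R2) (hf : f ≠ 0) (hg : g ≠ 0) : newtDim f ≤ newtDim (f * g) := by
  have h2max : newtDim f ≤ 2 := by
    have h2 : Module.finrank ℝ (ℝ × ℝ) = 2 := by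
      rw [Module.finrank_prod, Module.finrank_self]
    exact h2 ▸ Submodule.finrank_le _
  have h1 : 1 ≤ newtDim f → 1 ≤ newtDim (f * g) := by
    intro h
    obtain ⟨a, ha, b, hb, hne⟩ := exists_pair hf h
    obtain ⟨s, hs, t, ht, hst⟩ := support_pair hf hg ha hb hne
    exact one_le_newtDim hs ht hst
  have h2 : 2 ≤ newtDim f → 2 ≤ newtDim (f * g) := by
    intro h
    by_contra hcon
    push_neg at hcon
    have hcon' : newtDim (f * g) ≤ 1 := by omega
    obtain ⟨a, ha, b, hb, hab⟩ := exists_pair hf (by omega)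
    obtain ⟨s, hs, t, ht, hst⟩ := support_pair hf hg ha hb hab
    set v : ℤ × ℤ := t - s with hv
    have hvne : v ≠ 0 := sub_ne_zero.2 (Ne.symm hst)
    set w : ℝ × ℝ := eR t - eR s with hw
    have hwne : w ≠ 0 := sub_ne_zero.2 (fun h' => hst (eR_inj h').symm)
    have hms : eR s ∈ affineSpan ℝ (newt (f * g)) :=
      subset_affineSpan ℝ _ (mem_newt hs)
    have hmt : eR t ∈ affineSpan ℝ (newt (f * g)) :=
      subset_affineSpan ℝ _ (mem_newt ht)
    have hwD : w ∈ (affineSpan ℝ (newt (f * g))).direction :=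
      AffineSubspace.vsub_mem_direction hmt hms
    have hspan : (ℝ ∙ w) = (affineSpan ℝ (newt (f * g))).direction := by
      apply Submodule.eq_of_le_of_finrank_le
        ((Submodule.span_singleton_le_iff_mem _ _).2 hwD)
      rw [finrank_span_singleton hwne]
      exact hcon'
    have hline : ∀ c ∈ (f * g).coeff.support, v.2 * c.1 - v.1 * c.2 = v.2 * s.1 - v.1 * s.2 := by
      intro c hc
      have hmc : eR c ∈ affineSpan ℝ (newt (f * g)) :=
        subset_affineSpan ℝ _ (mem_newt hc)
      have hcD : eR c - eR s ∈ (affineSpan ℝ (newt (f * g))).direction :=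
        AffineSubspace.vsub_mem_direction hmc hms
      rw [← hspan] at hcD
      obtain ⟨r, hr⟩ := Submodule.mem_span_singleton.1 hcD
      have h1 : r * ((t.1 : ℝ) - s.1) = (c.1 : ℝ) - s.1 := by
        have := congrArg Prod.fst hr
        simpa [hw, eR, Prod.smul_def] using this
      have h2 : r * ((t.2 : ℝ) - s.2) = (c.2 : ℝ) - s.2 := by
        have := congrArg Prod.snd hr
        simpa [hw, eR, Prod.smul_def] using this
      have hRgoal : ((v.2 * c.1 - v.1 * c.2 : ℤ) : ℝ) = ((v.2 * s.1 - v.1 * s.2 : ℤ) : ℝ) := by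
        have hv1 : (v.1 : ℤ) = t.1 - s.1 := by rw [hv]; rfl
        have hv2 : (v.2 : ℤ) = t.2 - s.2 := by rw [hv]; rfl
        rw [hv1, hv2]
        push_cast
        linear_combination ((t.1 : ℝ) - s.1) * h2 - ((t.2 : ℝ) - s.2) * h1
      exact_mod_cast hRgoal
    obtain ⟨a₁, ha₁, b₁, hb₁, hm₁, hfmax, hgmax, -⟩ := key (dv v) (dv_inj hvne) f g hf hg
    obtain ⟨a₂, ha₂, b₂, hb₂, hm₂, hfmin, hgmin, -⟩ :=
      key (-(dv v)) (fun x y hxy => dv_inj hvne (neg_injective hxy)) f g hf hg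
    have hLfmax : ∀ x ∈ f.coeff.support, lam v x ≤ lam v a₁ := fun x hx => dv_le (hfmax x hx)
    have hLfmin : ∀ x ∈ f.coeff.support, lam v a₂ ≤ lam v x := fun x hx => dv_le (neg_d_le (hfmin x hx))
    have hLgmax : ∀ y ∈ g.coeff.support, lam v y ≤ lam v b₁ := fun y hy => dv_le (hgmax y hy)
    have hLgmin : ∀ y ∈ g.coeff.support, lam v b₂ ≤ lam v y := fun y hy => dv_le (neg_d_le (hgmin y hy))
    have hadd : ∀ x y : ℤ × ℤ, lam v (x + y) = lam v x + lam v y := by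
      intro x y
      simp only [lam, Prod.fst_add, Prod.snd_add]
      ring
    have hsum : lam v a₁ + lam v b₁ = lam v a₂ + lam v b₂ := by
      have e1 := hline _ hm₁
      have e2 := hline _ hm₂
      have e1' : lam v (a₁ + b₁) = lam v (a₂ + b₂) := by
        unfold lam; rw [e1, e2]
      rw [hadd, hadd] at e1'
      exact e1'
    have hLa : lam v a₁ = lam v a₂ := by
      have q1 : lam v a₂ ≤ lam v a₁ := hLfmin a₁ ha₁
      have q2 : lam v b₂ ≤ lam v b₁ := hLgmin b₁ hb₁
      omega
    have hconst : ∀ p ∈ f.coeff.support, v.2 * p.1 - v.1 * p.2 = lam v a₁ := by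
      intro p hp
      have q1 : lam v p ≤ lam v a₁ := hLfmax p hp
      have q2 : lam v a₂ ≤ lam v p := hLfmin p hp
      have : lam v p = lam v a₁ := by omega
      exact this
    have := newtDim_le_one hvne hconst
    omega
  omega

end NewtAux

/-- For nonzero `f, g ∈ 𝔽₂[x^{±1}, y^{±1}]`, the affine dimension
of the Newton polygon of `f * g` is at least the maximum of those of `f` and `g`. -/
theorem newtDim_mul_ge_max (f g : R2) (hf : f ≠ 0) (hg : g ≠ 0) :
    max (newtDim f) (newtDim g) ≤ newtDim (f * g) := by
  refine max_le (NewtAux.half f g hf hg) ?_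
  have := NewtAux.half g f hg hf
  rwa [mul_comm g f] at this
end

section
/- Let f ∈ R. Then the number of nonzero coefficients of f (i.e. the cardinality of supp(f)) is even if and only if there exist P, Q ∈ R such that f = (1 + x) * P + (1 + y) * Q. -/
lemma R2.one_add_one : (1 : R2) + 1 = 0 := by
  rw [AddMonoidAlgebra.one_def, ← AddMonoidAlgebra.single_add]
  have : (1 : ZMod 2) + 1 = 0 := by decide
  rw [this, AddMonoidAlgebra.single_zero]

lemma R2.add_self (a : R2) : a + a = 0 := by
  calc a + a = (1 + 1) * a := by ring
    _ = 0 := by rw [R2.one_add_one, zero_mul]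

lemma mono_mul (p q : ℤ × ℤ) : mono p * mono q = mono (p + q) := by
  simp [mono, AddMonoidAlgebra.single_mul_single]

lemma mono_zero : mono 0 = 1 := by
  simp [mono, AddMonoidAlgebra.one_def]

noncomputable def I : Ideal R2 := Ideal.span {1 + mono (1, 0), 1 + mono (0, 1)}

noncomputable def S : AddSubgroup (ℤ × ℤ) where
  carrier := {p | 1 + mono p ∈ I}
  zero_mem' := by
    simp only [Set.mem_setOf_eq, mono_zero, R2.one_add_one]
    exact I.zero_mem
  add_mem' := by
    intro p q hp hq
    simp only [Set.mem_setOf_eq] at *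
    have h : 1 + mono (p + q) = mono p * (1 + mono q) + (1 + mono p) := by
      rw [← mono_mul]
      linear_combination -(R2.add_self (mono p))
    rw [h]
    exact I.add_mem (I.mul_mem_left _ hq) hp
  neg_mem' := by
    intro p hp
    simp only [Set.mem_setOf_eq] at *
    have h : 1 + mono (-p) = mono (-p) * (1 + mono p) := by
      rw [mul_add, mul_one, mono_mul, neg_add_cancel, mono_zero, add_comm]
    rw [h]
    exact I.mul_mem_left _ hp

lemma mem_S (p : ℤ × ℤ) : 1 + mono p ∈ I := by
  have : p ∈ S := by
    have hp : p = p.1 • ((1 : ℤ), (0 : ℤ)) + p.2 • ((0 : ℤ), (1 : ℤ)) := by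
      simp [Prod.ext_iff]
    rw [hp]
    exact S.add_mem (S.zsmul_mem (Ideal.subset_span (by simp)) _)
      (S.zsmul_mem (Ideal.subset_span (by simp)) _)
  exact this

lemma coeff_one : ∀ a : ZMod 2, a ≠ 0 → a = 1 := by decide

noncomputable def ε : R2 →ₐ[ZMod 2] ZMod 2 :=
  AddMonoidAlgebra.lift (ZMod 2) (ZMod 2) (ℤ × ℤ) 1

lemma ε_single (p : ℤ × ℤ) (c : ZMod 2) : ε (AddMonoidAlgebra.single p c) = c := by
  simp [ε, AddMonoidAlgebra.lift_single]

lemma ε_eq_card (f : R2) : ε f = (f.coeff.support.card : ZMod 2) := by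
  conv_lhs => rw [← AddMonoidAlgebra.sum_coeff_single f]
  rw [Finsupp.sum, map_sum]
  rw [Finset.sum_congr rfl (fun p hp =>
    (ε_single p (f.coeff p)).trans (coeff_one (f.coeff p) (Finsupp.mem_support_iff.mp hp)))]
  simp [Finset.sum_const]

lemma even_iff_cast (n : ℕ) : Even n ↔ (n : ZMod 2) = 0 := by
  rw [ZMod.natCast_eq_zero_iff]
  exact (even_iff_two_dvd (α := ℕ))

/-- An element `f ∈ 𝔽₂[x^{±1}, y^{±1}]` has an even number of
nonzero coefficients iff it decomposes as `f = (1 + x) P + (1 + y) Q`; this is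
the condition for the existence of the CZ circuit `𝒰_f`. -/
theorem even_support_iff_decomposition (f : R2) :
    Even f.coeff.support.card ↔
      ∃ P Q : R2, f = (1 + mono (1, 0)) * P + (1 + mono (0, 1)) * Q := by
  constructor
  · rintro ⟨k, hk⟩
    have e : ∑ p ∈ f.coeff.support, (1 + mono p) = f := by
      rw [Finset.sum_add_distrib, Finset.sum_const, hk]
      have hz : (k + k) • (1 : R2) = 0 := by rw [add_smul]; exact R2.add_self _
      rw [hz, zero_add]
      conv_rhs => rw [← AddMonoidAlgebra.sum_coeff_single f]
      rw [Finsupp.sum]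
      refine Finset.sum_congr rfl fun p hp => ?_
      rw [show f.coeff p = 1 from coeff_one _ (Finsupp.mem_support_iff.mp hp)]
      rfl
    have hf : f ∈ I := e ▸ Ideal.sum_mem I (fun p _ => mem_S p)
    obtain ⟨u, v, huv⟩ := Ideal.mem_span_pair.mp hf
    exact ⟨u, v, by rw [← huv]; ring⟩
  · rintro ⟨P, Q, rfl⟩
    rw [even_iff_cast, ← ε_eq_card]
    have h1 : ε (mono (1, 0)) = 1 := ε_single _ _
    have h2 : ε (mono (0, 1)) = 1 := ε_single _ _
    rw [map_add, map_mul, map_mul, map_add, map_add, map_one, h1, h2]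
    have : (1 : ZMod 2) + 1 = 0 := by decide
    rw [this, zero_mul, zero_mul, add_zero]
end

section
/- Let F, K₁, K₂ be polynomials over ZMod 2 with F ≠ 0. Let d₁ = gcd(F, K₁), d₂ = gcd(F, K₂), d₀ = gcd(F, K₁ + K₂), and let Q₁, Q₂, Q₀ be polynomials with F = d₁ Q₁ = d₂ Q₂ = d₀ Q₀. Then Q₀ divides lcm(Q₁, Q₂). -/
/-- Over `𝔽₂`, let `F ≠ 0`, `d₁ = gcd(F, K₁)`, `d₂ = gcd(F, K₂)`,
`d₀ = gcd(F, K₁ + K₂)`, and `F = d₁ Q₁ = d₂ Q₂ = d₀ Q₀`. Then `Q₀ ∣ lcm(Q₁, Q₂)`. -/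
theorem quotient_dvd_lcm_of_gcd_sum
    (F K₁ K₂ Q₀ Q₁ Q₂ : Polynomial (ZMod 2)) (hF : F ≠ 0)
    (hQ₁ : F = gcd F K₁ * Q₁) (hQ₂ : F = gcd F K₂ * Q₂)
    (hQ₀ : F = gcd F (K₁ + K₂) * Q₀) :
    Q₀ ∣ lcm Q₁ Q₂ := by
  set d₁ := gcd F K₁ with hd₁
  set d₂ := gcd F K₂ with hd₂
  set d₀ := gcd F (K₁ + K₂) with hd₀
  set g := gcd d₁ d₂ with hg
  have hgF : g ∣ F := (gcd_dvd_left d₁ d₂).trans (gcd_dvd_left F K₁)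
  have hgne : g ≠ 0 := fun h => hF (by simpa [h] using hgF)
  -- g divides d₀
  have hgd₀ : g ∣ d₀ := by
    apply dvd_gcd hgF
    exact dvd_add ((gcd_dvd_left d₁ d₂).trans (gcd_dvd_right F K₁))
      ((gcd_dvd_right d₁ d₂).trans (gcd_dvd_right F K₂))
  obtain ⟨e, he⟩ := hgd₀
  obtain ⟨s₁, hs₁⟩ : g ∣ d₁ := gcd_dvd_left d₁ d₂
  obtain ⟨s₂, hs₂⟩ : g ∣ d₂ := gcd_dvd_right d₁ d₂
  -- s₁ and s₂ are coprime
  have hunit : IsUnit (gcd s₁ s₂) := by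
    have hassoc : Associated (gcd (g * s₁) (g * s₂)) (g * gcd s₁ s₂) := gcd_mul_left' g s₁ s₂
    have hgg : gcd (g * s₁) (g * s₂) = g := by rw [← hs₁, ← hs₂]
    have hdd : g * gcd s₁ s₂ ∣ g := hassoc.symm.dvd.trans (dvd_of_eq hgg)
    exact isUnit_of_dvd_one ((mul_dvd_mul_iff_left hgne).mp (by rw [mul_one]; exact hdd))
  have hcop : IsCoprime s₁ s₂ := (gcd_isUnit_iff s₁ s₂).mp hunit
  -- lcm Q₁ Q₂ = Q₁ * a = Q₂ * b
  obtain ⟨a, ha⟩ := dvd_lcm_left Q₁ Q₂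
  obtain ⟨b, hb⟩ := dvd_lcm_right Q₁ Q₂
  -- s₂ * a = s₁ * b
  have key : s₂ * a = s₁ * b := by
    have hFab : F * (s₂ * a) = F * (s₁ * b) := by
      have h1 : F = g * s₁ * Q₁ := by rw [hQ₁, hs₁]
      have h2 : F = g * s₂ * Q₂ := by rw [hQ₂, hs₂]
      calc F * (s₂ * a) = (g * s₂) * (s₁ * (Q₁ * a)) := by rw [h1]; ring
        _ = (g * s₂) * (s₁ * (Q₂ * b)) := by rw [← ha, ← hb]
        _ = F * (s₁ * b) := by rw [h2]; ring
    exact mul_left_cancel₀ hF hFab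
  -- s₁ ∣ a
  have hs₁a : s₁ ∣ a := hcop.dvd_of_dvd_mul_left ⟨b, key⟩
  obtain ⟨c, hc⟩ := hs₁a
  -- F ∣ g * lcm Q₁ Q₂, i.e. g*(e*Q₀) ∣ g*lcm
  have : g * (e * Q₀) ∣ g * lcm Q₁ Q₂ := by
    refine ⟨c, ?_⟩
    have h1 : F = g * s₁ * Q₁ := by rw [hQ₁, hs₁]
    calc g * lcm Q₁ Q₂ = g * (Q₁ * (s₁ * c)) := by rw [ha, hc]
      _ = (g * s₁ * Q₁) * c := by ring
      _ = g * (e * Q₀) * c := by rw [← h1, hQ₀, he]; ring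
  have heQ₀ : e * Q₀ ∣ lcm Q₁ Q₂ := (mul_dvd_mul_iff_left hgne).mp this
  exact (dvd_mul_left Q₀ e).trans heQ₀
end

section
/- Let u₁, v₁, u₂, v₂ ∈ ℤ with u₁ v₂ - u₂ v₁ ≠ 0, and set q₁ = x^{u₁} y^{v₁} and q₂ = x^{u₂} y^{v₂} in R. Let t₁ and t₂ be polynomials in one variable over ZMod 2, each with constant coefficient 1. Then t₁(q₁) and t₂(q₂) are relatively prime in R: every common divisor of t₁(q₁) and t₂(q₂) in R is a unit. -/
/-- A linear functional on `ℤ × ℤ` as an `AddMonoidHom`. -/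
def lf (a b : ℤ) : (ℤ × ℤ) →+ ℤ where
  toFun p := a * p.1 + b * p.2
  map_zero' := by simp
  map_add' p q := by simp; ring

lemma mul_apply_eq_zero_of_bounds (φ : (ℤ × ℤ) →+ ℤ) {x y : R2} {Mx My : ℤ}
    (hx : ∀ a ∈ x.coeff.support, φ a ≤ Mx) (hy : ∀ b ∈ y.coeff.support, φ b ≤ My)
    {p : ℤ × ℤ} (hp : ¬ φ p ≤ Mx + My) : (x * y).coeff p = 0 := by
  classical
  rw [← Finsupp.notMem_support_iff]
  intro hmem
  obtain ⟨a, ha, b, hb, rfl⟩ := Finset.mem_add.mp (AddMonoidAlgebra.support_coeff_mul_subset x y hmem)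
  exact hp (by rw [map_add]; exact add_le_add (hx a ha) (hy b hb))

lemma exists_top (φ : (ℤ × ℤ) →+ ℤ) {d e : R2} {Md Me : ℤ}
    (hd1 : ∀ a ∈ d.coeff.support, φ a ≤ Md) (hd2 : ∃ a ∈ d.coeff.support, φ a = Md)
    (he1 : ∀ b ∈ e.coeff.support, φ b ≤ Me) (he2 : ∃ b ∈ e.coeff.support, φ b = Me) :
    ∃ p ∈ (d * e).coeff.support, φ p = Md + Me := by
  classical
  set d' : R2 := AddMonoidAlgebra.ofCoeff (Finsupp.filter (fun a => φ a = Md) d.coeff) with hd'def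
  set e' : R2 := AddMonoidAlgebra.ofCoeff (Finsupp.filter (fun b => φ b = Me) e.coeff) with he'def
  have hd'supp : ∀ a ∈ d'.coeff.support, a ∈ d.coeff.support ∧ φ a = Md := by
    intro a ha
    rw [hd'def, AddMonoidAlgebra.coeff_ofCoeff, Finsupp.support_filter, Finset.mem_filter] at ha
    exact ha
  have he'supp : ∀ b ∈ e'.coeff.support, b ∈ e.coeff.support ∧ φ b = Me := by
    intro b hb
    rw [he'def, AddMonoidAlgebra.coeff_ofCoeff, Finsupp.support_filter, Finset.mem_filter] at hb
    exact hb
  have hd'0 : d' ≠ 0 := by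
    obtain ⟨a, ha, haM⟩ := hd2
    intro h0
    have : d'.coeff a = d.coeff a := Finsupp.filter_apply_pos _ _ haM
    rw [h0] at this
    exact Finsupp.mem_support_iff.1 ha this.symm
  have he'0 : e' ≠ 0 := by
    obtain ⟨b, hb, hbM⟩ := he2
    intro h0
    have : e'.coeff b = e.coeff b := Finsupp.filter_apply_pos _ _ hbM
    rw [h0] at this
    exact Finsupp.mem_support_iff.1 hb this.symm
  have hne : d' * e' ≠ 0 := mul_ne_zero hd'0 he'0
  obtain ⟨p, hp⟩ : ∃ p, (d' * e').coeff p ≠ 0 := by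
    by_contra h
    push_neg at h
    exact hne (AddMonoidAlgebra.coeff_inj.1 (Finsupp.ext fun a => by rw [AddMonoidAlgebra.coeff_zero]; exact h a))
  have hpmem : p ∈ (d' * e').coeff.support := Finsupp.mem_support_iff.2 hp
  obtain ⟨a, ha, b, hb, rfl⟩ := Finset.mem_add.mp (AddMonoidAlgebra.support_coeff_mul_subset d' e' hpmem)
  have hφp : φ (a + b) = Md + Me := by
    rw [map_add, (hd'supp a ha).2, (he'supp b hb).2]
  refine ⟨a + b, ?_, hφp⟩
  -- split d = d' + d'', e = e' + e''
  have hdsplit : d = d' + (d - d') := by ring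
  have hesplit : e = e' + (e - e') := by ring
  have hd''supp : ∀ q ∈ (d - d').coeff.support, q ∈ d.coeff.support ∧ φ q ≤ Md - 1 := by
    intro q hq
    have hq0 : d.coeff q - d'.coeff q ≠ 0 := by
      have := Finsupp.mem_support_iff.1 hq
      rwa [AddMonoidAlgebra.coeff_sub, Finsupp.sub_apply] at this
    have hdq : d.coeff q ≠ 0 := by
      intro h
      apply hq0
      have : d'.coeff q = 0 := by
        rw [hd'def, AddMonoidAlgebra.coeff_ofCoeff, Finsupp.filter_apply]
        split <;> simp [h]
      rw [h, this, sub_zero]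
    have hmem : q ∈ d.coeff.support := Finsupp.mem_support_iff.2 hdq
    refine ⟨hmem, ?_⟩
    have hle := hd1 q hmem
    have hne : φ q ≠ Md := by
      intro hEq
      apply hq0
      have hdd : d'.coeff q = d.coeff q := by rw [hd'def]; exact Finsupp.filter_apply_pos _ _ hEq
      rw [hdd, sub_self]
    omega
  have he''supp : ∀ q ∈ (e - e').coeff.support, q ∈ e.coeff.support ∧ φ q ≤ Me - 1 := by
    intro q hq
    have hq0 : e.coeff q - e'.coeff q ≠ 0 := by
      have := Finsupp.mem_support_iff.1 hq
      rwa [AddMonoidAlgebra.coeff_sub, Finsupp.sub_apply] at this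
    have heq : e.coeff q ≠ 0 := by
      intro h
      apply hq0
      have : e'.coeff q = 0 := by
        rw [he'def, AddMonoidAlgebra.coeff_ofCoeff, Finsupp.filter_apply]
        split <;> simp [h]
      rw [h, this, sub_zero]
    have hmem : q ∈ e.coeff.support := Finsupp.mem_support_iff.2 heq
    refine ⟨hmem, ?_⟩
    have hle := he1 q hmem
    have hne : φ q ≠ Me := by
      intro hEq
      apply hq0
      have hee : e'.coeff q = e.coeff q := by rw [he'def]; exact Finsupp.filter_apply_pos _ _ hEq
      rw [hee, sub_self]
    omega
  have hexp : d * e = d' * e' + (d' * (e - e') + ((d - d') * e' + (d - d') * (e - e'))) := by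
    ring
  have hz1 : (d' * (e - e')).coeff (a + b) = 0 :=
    mul_apply_eq_zero_of_bounds φ (fun q hq => ((hd'supp q hq).2).le.trans_eq rfl |>.trans (le_refl Md))
      (fun q hq => (he''supp q hq).2) (by omega)
  have hz2 : ((d - d') * e').coeff (a + b) = 0 :=
    mul_apply_eq_zero_of_bounds φ (fun q hq => (hd''supp q hq).2)
      (fun q hq => ((he'supp q hq).2).le) (by omega)
  have hz3 : ((d - d') * (e - e')).coeff (a + b) = 0 :=
    mul_apply_eq_zero_of_bounds φ (fun q hq => (hd''supp q hq).2)
      (fun q hq => (he''supp q hq).2) (by omega)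
  rw [Finsupp.mem_support_iff, hexp]
  rw [AddMonoidAlgebra.coeff_add, AddMonoidAlgebra.coeff_add, AddMonoidAlgebra.coeff_add,
    Finsupp.add_apply, Finsupp.add_apply, Finsupp.add_apply, hz1, hz2, hz3]
  simpa using hp

lemma support_level (φ : (ℤ × ℤ) →+ ℤ) {d e : R2} (hd : d ≠ 0) (he : e ≠ 0) {c : ℤ}
    (hf : ∀ p ∈ (d * e).coeff.support, φ p = c) :
    ∀ a ∈ d.coeff.support, ∀ a' ∈ d.coeff.support, φ a = φ a' := by
  classical
  have hdne : d.coeff.support.Nonempty := Finsupp.support_nonempty_iff.2 (mt AddMonoidAlgebra.coeff_eq_zero.1 hd)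
  have hene : e.coeff.support.Nonempty := Finsupp.support_nonempty_iff.2 (mt AddMonoidAlgebra.coeff_eq_zero.1 he)
  set Md := (d.coeff.support.image φ).max' (hdne.image φ) with hMd
  set md := (d.coeff.support.image φ).min' (hdne.image φ) with hmd
  set Me := (e.coeff.support.image φ).max' (hene.image φ) with hMe
  set me := (e.coeff.support.image φ).min' (hene.image φ) with hme
  have hd1 : ∀ a ∈ d.coeff.support, φ a ≤ Md :=
    fun a ha => Finset.le_max' _ _ (Finset.mem_image_of_mem φ ha)
  have hd1' : ∀ a ∈ d.coeff.support, md ≤ φ a :=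
    fun a ha => Finset.min'_le _ _ (Finset.mem_image_of_mem φ ha)
  have he1 : ∀ b ∈ e.coeff.support, φ b ≤ Me :=
    fun b hb => Finset.le_max' _ _ (Finset.mem_image_of_mem φ hb)
  have he1' : ∀ b ∈ e.coeff.support, me ≤ φ b :=
    fun b hb => Finset.min'_le _ _ (Finset.mem_image_of_mem φ hb)
  obtain ⟨a₀, ha₀, ha₀M⟩ := Finset.mem_image.mp ((d.coeff.support.image φ).max'_mem (hdne.image φ))
  obtain ⟨a₁, ha₁, ha₁m⟩ := Finset.mem_image.mp ((d.coeff.support.image φ).min'_mem (hdne.image φ))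
  obtain ⟨b₀, hb₀, hb₀M⟩ := Finset.mem_image.mp ((e.coeff.support.image φ).max'_mem (hene.image φ))
  obtain ⟨b₁, hb₁, hb₁m⟩ := Finset.mem_image.mp ((e.coeff.support.image φ).min'_mem (hene.image φ))
  obtain ⟨p₁, hp₁, hp₁v⟩ := exists_top φ hd1 ⟨a₀, ha₀, ha₀M⟩ he1 ⟨b₀, hb₀, hb₀M⟩
  obtain ⟨p₂, hp₂, hp₂v⟩ := exists_top (Md := -md) (Me := -me) (-φ)
    (fun a ha => by have := hd1' a ha; simp only [AddMonoidHom.neg_apply]; omega)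
    ⟨a₁, ha₁, by rw [AddMonoidHom.neg_apply, ha₁m, ← hmd]⟩
    (fun b hb => by have := he1' b hb; simp only [AddMonoidHom.neg_apply]; omega)
    ⟨b₁, hb₁, by rw [AddMonoidHom.neg_apply, hb₁m, ← hme]⟩
  have h1 : Md + Me = c := hp₁v ▸ hf p₁ hp₁
  have h2 : md + me = c := by
    have := hf p₂ hp₂
    simp only [AddMonoidHom.neg_apply] at hp₂v
    omega
  have hdm : md ≤ Md := (hd1' a₀ ha₀).trans (le_of_eq ha₀M)
  have hem : me ≤ Me := (he1' b₀ hb₀).trans (le_of_eq hb₀M)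
  have hMdeq : Md = md := by omega
  intro a ha a' ha'
  have := hd1 a ha; have := hd1' a ha; have := hd1 a' ha'; have := hd1' a' ha'
  omega

lemma aeval_mono_eq (t : Polynomial (ZMod 2)) (w : ℤ × ℤ) :
    Polynomial.aeval (mono w) t
      = ∑ n ∈ t.support, AddMonoidAlgebra.single (n • w) (t.coeff n) := by
  rw [Polynomial.aeval_def, Polynomial.eval₂_eq_sum, Polynomial.sum_def]
  refine Finset.sum_congr rfl fun n _ => ?_
  rw [mono, AddMonoidAlgebra.single_pow, one_pow, ← Algebra.smul_def,
    AddMonoidAlgebra.smul_single, smul_eq_mul, mul_one]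

lemma nsmul_prod_ne_zero {w : ℤ × ℤ} (hw : w ≠ 0) {n : ℕ} (hn : n ≠ 0) : n • w ≠ 0 := by
  intro h
  apply hw
  have hn' : (n : ℤ) ≠ 0 := Int.natCast_ne_zero.mpr hn
  have h1 : (n : ℤ) * w.1 = 0 := by
    have := congrArg Prod.fst h
    simpa [nsmul_eq_mul] using this
  have h2 : (n : ℤ) * w.2 = 0 := by
    have := congrArg Prod.snd h
    simpa [nsmul_eq_mul] using this
  exact Prod.ext_iff.2 ⟨(mul_eq_zero.1 h1).resolve_left hn',
    (mul_eq_zero.1 h2).resolve_left hn'⟩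

lemma aeval_mono_apply_zero (t : Polynomial (ZMod 2)) {w : ℤ × ℤ} (hw : w ≠ 0) :
    (Polynomial.aeval (mono w) t : R2).coeff 0 = t.coeff 0 := by
  classical
  rw [aeval_mono_eq, AddMonoidAlgebra.coeff_sum, Finsupp.finset_sum_apply]
  simp only [AddMonoidAlgebra.coeff_single]
  by_cases h0 : (0 : ℕ) ∈ t.support
  · rw [Finset.sum_eq_single_of_mem 0 h0
      (fun n _ hne => Finsupp.single_eq_of_ne' (nsmul_prod_ne_zero hw hne))]
    rw [zero_smul]
    exact Finsupp.single_eq_same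
  · rw [Polynomial.notMem_support_iff.1 h0]
    exact Finset.sum_eq_zero fun n hn =>
      Finsupp.single_eq_of_ne' (nsmul_prod_ne_zero hw (fun h => h0 (h ▸ hn)))

lemma aeval_mono_support (t : Polynomial (ZMod 2)) (w : ℤ × ℤ) :
    ∀ p ∈ (Polynomial.aeval (mono w) t : R2).coeff.support, ∃ n : ℕ, p = n • w := by
  intro p hp
  rw [aeval_mono_eq, AddMonoidAlgebra.coeff_sum] at hp
  obtain ⟨n, _, hn⟩ := Finsupp.mem_support_finset_sum p hp
  exact ⟨n, Finset.mem_singleton.1 (Finsupp.support_single_subset hn)⟩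

/-- Let `q₁ = x^{u₁} y^{v₁}` and `q₂ = x^{u₂} y^{v₂}` with
`u₁ v₂ - u₂ v₁ ≠ 0`, and let `t₁, t₂` be one-variable polynomials over `𝔽₂` with
constant coefficient `1`. Then `t₁(q₁)` and `t₂(q₂)` are relatively prime in
`𝔽₂[x^{±1}, y^{±1}]`: every common divisor is a unit. -/
theorem eval_at_independent_monomials_coprime
    (u₁ v₁ u₂ v₂ : ℤ) (hdet : u₁ * v₂ - u₂ * v₁ ≠ 0)
    (t₁ t₂ : Polynomial (ZMod 2)) (h₁ : t₁.coeff 0 = 1) (h₂ : t₂.coeff 0 = 1) :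
    ∀ d : R2, d ∣ Polynomial.aeval (mono (u₁, v₁)) t₁ →
      d ∣ Polynomial.aeval (mono (u₂, v₂)) t₂ → IsUnit d := by
  intro d hdvd1 hdvd2
  have hw₁ : ((u₁, v₁) : ℤ × ℤ) ≠ 0 := by
    intro h
    rw [Prod.ext_iff] at h
    simp only [Prod.fst_zero, Prod.snd_zero] at h
    apply hdet
    rw [h.1, h.2]
    ring
  have hw₂ : ((u₂, v₂) : ℤ × ℤ) ≠ 0 := by
    intro h
    rw [Prod.ext_iff] at h
    simp only [Prod.fst_zero, Prod.snd_zero] at h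
    apply hdet
    rw [h.1, h.2]
    ring
  have hf₁ : (Polynomial.aeval (mono (u₁, v₁)) t₁ : R2) ≠ 0 := by
    intro h
    have := aeval_mono_apply_zero t₁ hw₁
    rw [h, h₁] at this
    simp at this
  have hf₂ : (Polynomial.aeval (mono (u₂, v₂)) t₂ : R2) ≠ 0 := by
    intro h
    have := aeval_mono_apply_zero t₂ hw₂
    rw [h, h₂] at this
    simp at this
  obtain ⟨e₁, he₁⟩ := hdvd1
  obtain ⟨e₂, he₂⟩ := hdvd2
  have hd0 : d ≠ 0 := by rintro rfl; rw [zero_mul] at he₁; exact hf₁ he₁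
  have he₁0 : e₁ ≠ 0 := by rintro rfl; rw [mul_zero] at he₁; exact hf₁ he₁
  have he₂0 : e₂ ≠ 0 := by rintro rfl; rw [mul_zero] at he₂; exact hf₂ he₂
  -- functionals killing the two directions
  set φ₁ : (ℤ × ℤ) →+ ℤ := lf v₁ (-u₁) with hφ₁
  set φ₂ : (ℤ × ℤ) →+ ℤ := lf v₂ (-u₂) with hφ₂
  have hφ₁w : ∀ n : ℕ, φ₁ (n • ((u₁, v₁) : ℤ × ℤ)) = 0 := by
    intro n
    rw [AddMonoidHom.map_nsmul]
    have : φ₁ ((u₁, v₁) : ℤ × ℤ) = 0 := by simp [hφ₁, lf]; ring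
    rw [this, smul_zero]
  have hφ₂w : ∀ n : ℕ, φ₂ (n • ((u₂, v₂) : ℤ × ℤ)) = 0 := by
    intro n
    rw [AddMonoidHom.map_nsmul]
    have : φ₂ ((u₂, v₂) : ℤ × ℤ) = 0 := by simp [hφ₂, lf]; ring
    rw [this, smul_zero]
  have hlev₁ : ∀ a ∈ d.coeff.support, ∀ a' ∈ d.coeff.support, φ₁ a = φ₁ a' := by
    refine support_level φ₁ hd0 he₁0 (c := 0) ?_
    intro p hp
    rw [← he₁] at hp
    obtain ⟨n, rfl⟩ := aeval_mono_support t₁ (u₁, v₁) p hp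
    exact hφ₁w n
  have hlev₂ : ∀ a ∈ d.coeff.support, ∀ a' ∈ d.coeff.support, φ₂ a = φ₂ a' := by
    refine support_level φ₂ hd0 he₂0 (c := 0) ?_
    intro p hp
    rw [← he₂] at hp
    obtain ⟨n, rfl⟩ := aeval_mono_support t₂ (u₂, v₂) p hp
    exact hφ₂w n
  -- d's support is a single point
  obtain ⟨p, hp⟩ := Finsupp.support_nonempty_iff.2 (mt AddMonoidAlgebra.coeff_eq_zero.1 hd0)
  have hsub : d.coeff.support ⊆ {p} := by
    intro q hq
    rw [Finset.mem_singleton]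
    have e1 : v₁ * q.1 + (-u₁) * q.2 = v₁ * p.1 + (-u₁) * p.2 := hlev₁ q hq p hp
    have e2 : v₂ * q.1 + (-u₂) * q.2 = v₂ * p.1 + (-u₂) * p.2 := hlev₂ q hq p hp
    have hx : (u₁ * v₂ - u₂ * v₁) * (q.1 - p.1) = 0 := by linear_combination u₁ * e2 - u₂ * e1
    have hy : (u₁ * v₂ - u₂ * v₁) * (q.2 - p.2) = 0 := by linear_combination v₁ * e2 - v₂ * e1
    have hx' := (mul_eq_zero.1 hx).resolve_left hdet
    have hy' := (mul_eq_zero.1 hy).resolve_left hdet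
    exact Prod.ext_iff.2 ⟨by omega, by omega⟩
  have hdp : d.coeff p ≠ 0 := Finsupp.mem_support_iff.1 hp
  have hdeq : d = AddMonoidAlgebra.single p (d.coeff p) :=
    AddMonoidAlgebra.coeff_injective (Finsupp.eq_single_iff.2 ⟨hsub, rfl⟩)
  rw [hdeq]
  refine isUnit_iff_exists_inv.2 ⟨AddMonoidAlgebra.single (-p) (d.coeff p)⁻¹, ?_⟩
  rw [AddMonoidAlgebra.single_mul_single, add_neg_cancel, mul_inv_cancel₀ hdp]
  exact AddMonoidAlgebra.one_def.symm
end
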